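/- Fix a nonincreasing φ : [1,n] → [1,k]. Then every vᵢ (1 ≤ i ≤ k) and every xⱼ (1 ≤ j ≤ n+1) lies in the set of nonnegative integer combinations of elements of S_φ in the lattice H. -/

import Mathlib

/-!
The homology lattice `H` of the `(n+k+1)`-punctured sphere:
`H = (ℤx₁ ⊕ ⋯ ⊕ ℤx_{n+1} ⊕ ℤv₁ ⊕ ⋯ ⊕ ℤv_k)/(x₁+⋯+x_{n+1} − v₁−⋯−v_k)`,
with the classes `c_{i,j} = v_k + ⋯ + v_{j+1} − x₁ − ⋯ − x_i`.
All indices are 1-based, as in the paper.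
-/

open Finset

/-- The free abelian group on `x₁,…,x_{n+1},v₁,…,v_k`. -/
abbrev FreeH (n k : ℕ) := (Fin (n + 1) ⊕ Fin k) →₀ ℤ

/-- The generator `xᵢ` (for `1 ≤ i ≤ n+1`) of the free abelian group. -/
noncomputable def XX (n k : ℕ) (i : ℕ) : FreeH n k :=
  if h : 1 ≤ i ∧ i ≤ n + 1 then Finsupp.single (Sum.inl (⟨i - 1, by omega⟩ : Fin (n + 1))) 1
  else 0

/-- The generator `vⱼ` (for `1 ≤ j ≤ k`) of the free abelian group. -/
noncomputable def VV (n k : ℕ) (j : ℕ) : FreeH n k :=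
  if h : 1 ≤ j ∧ j ≤ k then Finsupp.single (Sum.inr (⟨j - 1, by omega⟩ : Fin k)) 1
  else 0

/-- The relation `x₁+⋯+x_{n+1} − (v₁+⋯+v_k)`. -/
noncomputable def relH (n k : ℕ) : FreeH n k :=
  (∑ i ∈ Finset.Icc 1 (n + 1), XX n k i) - (∑ j ∈ Finset.Icc 1 k, VV n k j)

/-- The lattice `H`. -/
abbrev HLat (n k : ℕ) := FreeH n k ⧸ Submodule.span ℤ {relH n k}

/-- The class `xᵢ ∈ H`. -/
noncomputable def xH (n k i : ℕ) : HLat n k := Submodule.Quotient.mk (XX n k i)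

/-- The class `vⱼ ∈ H`. -/
noncomputable def vH (n k j : ℕ) : HLat n k := Submodule.Quotient.mk (VV n k j)

/-- The class `c_{i,j} = v_k + ⋯ + v_{j+1} − x₁ − ⋯ − x_i ∈ H`. -/
noncomputable def cH (n k i j : ℕ) : HLat n k :=
  (∑ j' ∈ Finset.Icc (j + 1) k, vH n k j') - (∑ i' ∈ Finset.Icc 1 i, xH n k i')

/-- The set `S_φ ⊆ H` attached to a nonincreasing function `φ : [1,n] → [1,k]`:
`S_φ = {v_j : j ∉ im φ} ⊔ {x_{i+1} : φ(i) = φ(i+1)} ⊔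
       {−c_{i,φ(i)} : φ(i−1) > φ(i) or i = 1} ⊔ {c_{i,φ(i)−1} : φ(i+1) < φ(i) or i = n}`. -/
def Sphi (n k : ℕ) (φ : ℕ → ℕ) : Set (HLat n k) :=
  {h | (∃ j, 1 ≤ j ∧ j ≤ k ∧ (∀ i, 1 ≤ i → i ≤ n → φ i ≠ j) ∧ h = vH n k j) ∨
       (∃ i, 1 ≤ i ∧ i + 1 ≤ n ∧ φ i = φ (i + 1) ∧ h = xH n k (i + 1)) ∨
       (∃ i, 1 ≤ i ∧ i ≤ n ∧ (i = 1 ∨ φ i < φ (i - 1)) ∧ h = - cH n k i (φ i)) ∨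
       (∃ i, 1 ≤ i ∧ i ≤ n ∧ (i = n ∨ φ (i + 1) < φ i) ∧ h = cH n k i (φ i - 1))}

/-!
Every generator is an explicit nonnegative combination of elements of `S_φ`. All the formulas
come from the identity `c_{i',j'} + x_{i+1} + ⋯ + x_{i'} = c_{i,j} + v_{j'+1} + ⋯ + v_j`
(for `i ≤ i'`, `j' ≤ j`) together with `c_{0,k} = 0` and `c_{n+1,0} = 0`, the latter being the
defining relation of `H`.

If `j` is not a value of `φ` then `vⱼ ∈ S_φ`. Otherwise `φ⁻¹(j)` is an interval `[a,b]`, and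
`vⱼ = c_{b,j-1} - c_{a,j} + x_{a+1} + ⋯ + x_b`, where `-c_{a,j}`, `c_{b,j-1}` and the `x`'s all lie
in `S_φ` because `[a,b]` is a maximal level set. Similarly `x_{i+1} ∈ S_φ` when `φ(i) = φ(i+1)`,
and otherwise `x_{i+1} = c_{i,φ(i)-1} - c_{i+1,φ(i+1)} + v_{φ(i+1)+1} + ⋯ + v_{φ(i)-1}`, with the
vanishing classes `c_{0,k}` and `c_{n+1,0}` taking the place of the missing values `φ(0)`, `φ(n+1)`.
-/

section Lattice

variable {n k : ℕ}

lemma cH_eq_sum_Ioc (i j : ℕ) :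
    cH n k i j = ∑ l ∈ Ioc j k, vH n k l - ∑ l ∈ Ioc 0 i, xH n k l := by
  rw [cH, Icc_add_one_left_eq_Ioc, ← Icc_add_one_left_eq_Ioc 0, zero_add]

lemma cH_add_sum_xH {i i' j j' : ℕ} (hi : i ≤ i') (hj : j' ≤ j) (hjk : j ≤ k) :
    cH n k i' j' + ∑ l ∈ Ioc i i', xH n k l = cH n k i j + ∑ l ∈ Ioc j' j, vH n k l := by
  rw [cH_eq_sum_Ioc, cH_eq_sum_Ioc, ← sum_Ioc_consecutive _ (Nat.zero_le i) hi,
    ← sum_Ioc_consecutive _ hj hjk]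
  abel

lemma cH_add_one_add_xH_add_one {i j j' : ℕ} (hj : j' ≤ j) (hjk : j ≤ k) :
    cH n k (i + 1) j' + xH n k (i + 1) = cH n k i j + ∑ l ∈ Ioc j' j, vH n k l := by
  simpa [Nat.Ioc_succ_singleton] using cH_add_sum_xH (Nat.le_add_right i 1) hj hjk

@[simp]
lemma cH_zero_self : cH n k 0 k = 0 := by
  simp [cH_eq_sum_Ioc]

@[simp]
lemma cH_succ_zero : cH n k (n + 1) 0 = 0 := by
  have hrel : (Submodule.span ℤ {relH n k}).mkQ (relH n k) = 0 :=
    (Submodule.Quotient.mk_eq_zero _).2 (Submodule.mem_span_singleton_self _)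
  rw [relH, map_sub, map_sum, map_sum] at hrel
  rw [cH, zero_add, ← neg_sub, neg_eq_zero]
  exact hrel

lemma vH_eq_zero {j : ℕ} (hj : ¬(1 ≤ j ∧ j ≤ k)) : vH n k j = 0 := by
  simp [vH, VV, hj]

lemma xH_eq_zero {i : ℕ} (hi : ¬(1 ≤ i ∧ i ≤ n + 1)) : xH n k i = 0 := by
  simp [xH, XX, hi]

end Lattice

lemma AddSubmonoid.mem_of_eq_add_of_neg_mem {G : Type*} [AddCommGroup G] {S : AddSubmonoid G}
    {a b x : G} (h : a = b + x) (ha : a ∈ S) (hb : -b ∈ S) : x ∈ S := by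
  have hx : x = -b + a := by rw [h]; abel
  exact hx ▸ add_mem hb ha

lemma AntitoneOn.exists_maximal_block {φ : ℕ → ℕ} {n i : ℕ} (hφ : AntitoneOn φ (Set.Icc 1 n))
    (hi : i ∈ Set.Icc 1 n) :
    ∃ a b, 1 ≤ a ∧ a ≤ b ∧ b ≤ n ∧ Set.EqOn φ (fun _ ↦ φ i) (Set.Icc a b) ∧
      (a = 1 ∨ φ a < φ (a - 1)) ∧ (b = n ∨ φ (b + 1) < φ b) := by
  classical
  have hex : ∃ a, 1 ≤ a ∧ φ a = φ i := ⟨i, hi.1, rfl⟩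
  set a := Nat.find hex
  set b := Nat.findGreatest (fun b ↦ i ≤ b ∧ φ b = φ i) n
  obtain ⟨ha, hφa⟩ : 1 ≤ a ∧ φ a = φ i := Nat.find_spec hex
  have hai : a ≤ i := Nat.find_min' hex ⟨hi.1, rfl⟩
  obtain ⟨hib, hφb⟩ : i ≤ b ∧ φ b = φ i :=
    Nat.findGreatest_spec (P := fun b ↦ i ≤ b ∧ φ b = φ i) hi.2 ⟨le_rfl, rfl⟩
  have hbn : b ≤ n := Nat.findGreatest_le n
  refine ⟨a, b, ha, hai.trans hib, hbn, fun l hl ↦ ?_, ?_, ?_⟩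
  · have hl' : l ∈ Set.Icc 1 n := ⟨ha.trans hl.1, hl.2.trans hbn⟩
    have h₁ := hφ hl' ⟨hl'.1.trans hl.2, hbn⟩ hl.2
    have h₂ := hφ ⟨ha, hl'.2.trans' hl.1⟩ hl' hl.1
    simp only
    omega
  · by_contra! h
    have hlt : a - 1 < a := by omega
    have hne : φ (a - 1) ≠ φ i := fun he ↦ Nat.find_min hex hlt ⟨by omega, he⟩
    have hle := hφ ⟨by omega, by omega⟩ ⟨ha, hai.trans hi.2⟩ (Nat.sub_le a 1)
    omega
  · by_contra! h
    have hne : φ (b + 1) ≠ φ i := fun he ↦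
      Nat.findGreatest_is_greatest (Nat.lt_succ_self b) (by omega) ⟨by omega, he⟩
    have hle := hφ ⟨ha.trans (hai.trans hib), hbn⟩ ⟨by omega, by omega⟩ (Nat.le_add_right b 1)
    omega

section Sphi

variable {n k : ℕ} {φ : ℕ → ℕ} {i : ℕ}

lemma vH_mem_Sphi {j : ℕ} (hj : 1 ≤ j ∧ j ≤ k) (h : ∀ i, 1 ≤ i → i ≤ n → φ i ≠ j) :
    vH n k j ∈ Sphi n k φ :=
  Or.inl ⟨j, hj.1, hj.2, h, rfl⟩

lemma xH_add_one_mem_Sphi (hi : 1 ≤ i) (hin : i + 1 ≤ n) (h : φ i = φ (i + 1)) :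
    xH n k (i + 1) ∈ Sphi n k φ :=
  Or.inr <| Or.inl ⟨i, hi, hin, h, rfl⟩

lemma neg_cH_mem_Sphi (hi : 1 ≤ i) (hin : i ≤ n) (h : i = 1 ∨ φ i < φ (i - 1)) :
    -cH n k i (φ i) ∈ Sphi n k φ :=
  Or.inr <| Or.inr <| Or.inl ⟨i, hi, hin, h, rfl⟩

lemma cH_sub_one_mem_Sphi (hi : 1 ≤ i) (hin : i ≤ n) (h : i = n ∨ φ (i + 1) < φ i) :
    cH n k i (φ i - 1) ∈ Sphi n k φ :=
  Or.inr <| Or.inr <| Or.inr ⟨i, hi, hin, h, rfl⟩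

theorem vH_mem_closure_Sphi (hφ : AntitoneOn φ (Set.Icc 1 n)) (j : ℕ) :
    vH n k j ∈ AddSubmonoid.closure (Sphi n k φ) := by
  by_cases hj : 1 ≤ j ∧ j ≤ k
  swap
  · rw [vH_eq_zero hj]
    exact zero_mem _
  by_cases him : ∃ i, 1 ≤ i ∧ i ≤ n ∧ φ i = j
  swap
  · push Not at him
    exact AddSubmonoid.subset_closure (vH_mem_Sphi hj him)
  obtain ⟨i, hi, hin, rfl⟩ := him
  obtain ⟨a, b, ha, hab, hbn, hblock, hleft, hright⟩ := hφ.exists_maximal_block ⟨hi, hin⟩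
  have hφa : φ a = φ i := hblock ⟨le_rfl, hab⟩
  have hφb : φ b = φ i := hblock ⟨hab, le_rfl⟩
  have key := cH_add_sum_xH (n := n) hab (Nat.sub_le (φ i) 1) hj.2
  rw [show Ioc (φ i - 1) (φ i) = {φ i} by ext; simp; omega, sum_singleton] at key
  refine AddSubmonoid.mem_of_eq_add_of_neg_mem key (add_mem ?_ (sum_mem fun l hl ↦ ?_)) ?_
  · exact AddSubmonoid.subset_closure (hφb ▸ cH_sub_one_mem_Sphi (by omega) hbn hright)
  · rw [mem_Ioc] at hl
    obtain ⟨m, rfl⟩ : ∃ m, l = m + 1 := ⟨l - 1, by omega⟩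
    refine AddSubmonoid.subset_closure (xH_add_one_mem_Sphi (by omega) (by omega) ?_)
    rw [hblock ⟨by omega, by omega⟩, hblock ⟨by omega, hl.2⟩]
  · exact AddSubmonoid.subset_closure (hφa ▸ neg_cH_mem_Sphi ha (hab.trans hbn) hleft)

section Generators

variable (hv : ∀ j, vH n k j ∈ AddSubmonoid.closure (Sphi n k φ))
  (hφk : Set.MapsTo φ (Set.Icc 1 n) (Set.Iic k))
include hv hφk

lemma xH_one_mem_closure_Sphi : xH n k 1 ∈ AddSubmonoid.closure (Sphi n k φ) := by
  rcases Nat.eq_zero_or_pos n with rfl | hn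
  · have key := cH_add_one_add_xH_add_one (n := 0) (i := 0) (Nat.zero_le k) le_rfl
    simp only [cH_succ_zero, cH_zero_self, zero_add] at key
    exact key ▸ sum_mem fun j _ ↦ hv j
  · have key := cH_add_one_add_xH_add_one (n := n) (i := 0) (hφk ⟨le_rfl, hn⟩) le_rfl
    simp only [cH_zero_self, zero_add] at key
    exact AddSubmonoid.mem_of_eq_add_of_neg_mem key.symm (sum_mem fun j _ ↦ hv j)
      (AddSubmonoid.subset_closure (neg_cH_mem_Sphi le_rfl hn (Or.inl rfl)))

lemma xH_add_one_mem_closure_Sphi (hφ : AntitoneOn φ (Set.Icc 1 n)) (hi : 1 ≤ i)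
    (hin : i + 1 ≤ n) : xH n k (i + 1) ∈ AddSubmonoid.closure (Sphi n k φ) := by
  have hle : φ (i + 1) ≤ φ i := hφ ⟨hi, by omega⟩ ⟨by omega, hin⟩ (Nat.le_add_right i 1)
  rcases hle.eq_or_lt with heq | hlt
  · exact AddSubmonoid.subset_closure (xH_add_one_mem_Sphi hi hin heq.symm)
  have key := cH_add_one_add_xH_add_one (n := n) (i := i) (j' := φ (i + 1)) (by omega)
    ((Nat.sub_le _ 1).trans (hφk ⟨hi, by omega⟩))
  refine AddSubmonoid.mem_of_eq_add_of_neg_mem key.symm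
    (add_mem ?_ (sum_mem fun j _ ↦ hv j)) (AddSubmonoid.subset_closure ?_)
  · exact AddSubmonoid.subset_closure (cH_sub_one_mem_Sphi hi (by omega) (Or.inr hlt))
  · exact neg_cH_mem_Sphi (by omega) hin (Or.inr (by rwa [Nat.add_sub_cancel]))

lemma xH_last_mem_closure_Sphi (hn : 1 ≤ n) :
    xH n k (n + 1) ∈ AddSubmonoid.closure (Sphi n k φ) := by
  have key := cH_add_one_add_xH_add_one (n := n) (i := n) (Nat.zero_le _)
    ((Nat.sub_le _ 1).trans (hφk ⟨hn, le_rfl⟩))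
  rw [cH_succ_zero, zero_add] at key
  exact key ▸ add_mem (AddSubmonoid.subset_closure (cH_sub_one_mem_Sphi hn le_rfl (Or.inl rfl)))
    (sum_mem fun j _ ↦ hv j)

end Generators

theorem xH_mem_closure_Sphi (hφ : AntitoneOn φ (Set.Icc 1 n))
    (hφk : Set.MapsTo φ (Set.Icc 1 n) (Set.Iic k)) (j : ℕ) :
    xH n k j ∈ AddSubmonoid.closure (Sphi n k φ) := by
  have hv := vH_mem_closure_Sphi (k := k) hφ
  by_cases hj : 1 ≤ j ∧ j ≤ n + 1
  swap
  · rw [xH_eq_zero hj]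
    exact zero_mem _
  obtain rfl | hj1 := eq_or_ne j 1
  · exact xH_one_mem_closure_Sphi hv hφk
  obtain ⟨i, rfl⟩ : ∃ i, j = i + 1 := ⟨j - 1, by omega⟩
  obtain hin | rfl : i + 1 ≤ n ∨ i = n := by omega
  · exact xH_add_one_mem_closure_Sphi hv hφk hφ (by omega) hin
  · exact xH_last_mem_closure_Sphi hv hφk (by omega)

end Sphi

theorem stmt_5 (n k : ℕ) (φ : ℕ → ℕ)
    (hmono : ∀ i, 1 ≤ i → i + 1 ≤ n → φ (i + 1) ≤ φ i)
    (hrange : ∀ i, 1 ≤ i → i ≤ n → 1 ≤ φ i ∧ φ i ≤ k) :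
    (∀ i : ℕ, 1 ≤ i → i ≤ k → vH n k i ∈ AddSubmonoid.closure (Sphi n k φ)) ∧
    (∀ j : ℕ, 1 ≤ j → j ≤ n + 1 → xH n k j ∈ AddSubmonoid.closure (Sphi n k φ)) := by
  have hφ : AntitoneOn φ (Set.Icc 1 n) :=
    antitoneOn_of_add_one_le Set.ordConnected_Icc fun i _ hi hi' ↦ hmono i hi.1 hi'.2
  have hφk : Set.MapsTo φ (Set.Icc 1 n) (Set.Iic k) := fun i hi ↦ (hrange i hi.1 hi.2).2
  exact ⟨fun i _ _ ↦ vH_mem_closure_Sphi hφ i, fun j _ _ ↦ xH_mem_closure_Sphi hφ hφk j⟩
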